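/- arXiv:2408.17288 — 2 statements merged into one kernel-verified Lean document; each statement's English description precedes it below -/
import Mathlib

section
/- Let z = (z_1,…,z_n) be an extreme point of the feasible set F = { (x_1,…,x_n) : x_i ∈ convexHull(Ω_i) for every i, and Σ_{i=1}^n A_i x_i ≤ ζ } of the relaxed problem. Then the index set I_Z = { i ∈ {1,…,n} : z_i ∈ Ω_i } has cardinality at least n − m, i.e. at most m of the blocks z_i fail to belong to the original mixed-integer sets Ω_i. -/
/-!
If more than `m` blocks `z i` of the extreme point were outside `Ω i`, each of them would be a
non-extreme point of the convex set `convexHull ℝ (Ω i)` and so could be moved both ways along a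
nonzero direction `w i`. The images `A i (w i)` of more than `m` such directions are linearly
dependent in `ℝᵐ`; moving every block along `± g i • w i`, for a small nontrivial relation `g`,
keeps `∑ i, A i (x i)` unchanged, hence stays feasible, and exhibits `z` as the midpoint of two
distinct feasible points.
-/

open Finset Module

section Convex

variable {E : Type*} [AddCommGroup E] [Module ℝ E] {s : Set E} {z w : E}

theorem Convex.exists_ne_zero_add_mem_sub_mem (hs : Convex ℝ s) (hz : z ∈ s)
    (hze : z ∉ s.extremePoints ℝ) : ∃ w ≠ 0, z + w ∈ s ∧ z - w ∈ s := by
  simp only [Set.extremePoints, Set.mem_ofPred_eq, hz, true_and, not_forall] at hze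
  obtain ⟨x, hx, y, hy, ⟨a, b, ha, hb, hab, rfl⟩, hxz⟩ := hze
  have hxy : x ≠ y := by
    rintro rfl
    exact hxz (by rw [← add_smul, hab, one_smul])
  set r := min a b
  have hr : 0 < r := lt_min ha hb
  refine ⟨r • (y - x), smul_ne_zero hr.ne' (sub_ne_zero.2 hxy.symm), ?_, ?_⟩
  · convert hs hx hy (sub_nonneg.2 (min_le_left a b)) (by positivity : 0 ≤ b + r) (by linarith)
      using 1
    module
  · convert hs hx hy (by positivity : 0 ≤ a + r) (sub_nonneg.2 (min_le_right a b)) (by linarith)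
      using 1
    module

theorem Convex.add_smul_mem_of_abs_le_one (hs : Convex ℝ s) (hadd : z + w ∈ s) (hsub : z - w ∈ s)
    {t : ℝ} (ht : |t| ≤ 1) : z + t • w ∈ s := by
  rw [abs_le] at ht
  convert hs hadd hsub (by linarith : 0 ≤ (1 + t) / 2) (by linarith : 0 ≤ (1 - t) / 2) (by ring)
    using 1
  module

theorem eq_zero_of_mem_extremePoints_of_add_mem_of_sub_mem (hz : z ∈ s.extremePoints ℝ)
    (hadd : z + w ∈ s) (hsub : z - w ∈ s) : w = 0 := by
  have hmid : z ∈ openSegment ℝ (z + w) (z - w) :=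
    ⟨1 / 2, 1 / 2, by norm_num, by norm_num, by norm_num, by module⟩
  simpa using hz.2 hadd hsub hmid

end Convex

section Blocks

variable {ι : Type*} [Fintype ι] {E : ι → Type*} [∀ i, AddCommGroup (E i)] [∀ i, Module ℝ (E i)]
  {V : Type*} [AddCommGroup V] [Module ℝ V]
  {s : ∀ i, Set (E i)} {L : ∀ i, E i →ₗ[ℝ] V} {C : Set V} {z : ∀ i, E i}

theorem eq_zero_of_mem_extremePoints_of_sum_eq_zero
    (hz : z ∈ {x : ∀ i, E i | (∀ i, x i ∈ s i) ∧ ∑ i, L i (x i) ∈ C}.extremePoints ℝ)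
    {u : ∀ i, E i} (hu_add : ∀ i, z i + u i ∈ s i) (hu_sub : ∀ i, z i - u i ∈ s i)
    (hLu : ∑ i, L i (u i) = 0) : u = 0 := by
  have hzC : ∑ i, L i (z i) ∈ C := hz.1.2
  refine eq_zero_of_mem_extremePoints_of_add_mem_of_sub_mem hz ⟨hu_add, ?_⟩ ⟨hu_sub, ?_⟩
  · simpa only [Pi.add_apply, map_add, sum_add_distrib, hLu, add_zero] using hzC
  · simpa only [Pi.sub_apply, map_sub, sum_sub_distrib, hLu, sub_zero] using hzC

open scoped Classical in
theorem linearIndepOn_of_mem_extremePoints (hs : ∀ i, Convex ℝ (s i))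
    (hz : z ∈ {x : ∀ i, E i | (∀ i, x i ∈ s i) ∧ ∑ i, L i (x i) ∈ C}.extremePoints ℝ)
    {w : ∀ i, E i} (hw_add : ∀ i, z i + w i ∈ s i) (hw_sub : ∀ i, z i - w i ∈ s i) :
    LinearIndepOn ℝ (fun i ↦ L i (w i)) ({i | w i ≠ 0} : Finset ι) := by
  rw [linearIndepOn_finset_iff]
  intro g hg i hi
  rw [sum_filter_of_ne fun j _ hj ↦ by rintro h; simp [h] at hj] at hg
  -- rescale the relation `g` so that every block moves within its segment `[z i - w i, z i + w i]`
  set c := (‖g‖ + 1)⁻¹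
  have hc : 0 < c := by positivity
  have hcg : ∀ j, |c * g j| ≤ 1 := fun j ↦ by
    rw [abs_mul, abs_of_pos hc, inv_mul_le_one₀ (by positivity), ← Real.norm_eq_abs]
    linarith [norm_le_pi_norm g j]
  have hu := eq_zero_of_mem_extremePoints_of_sum_eq_zero (u := fun j ↦ (c * g j) • w j) hz
    (fun j ↦ (hs j).add_smul_mem_of_abs_le_one (hw_add j) (hw_sub j) (hcg j))
    (fun j ↦ by
      have hneg : |-(c * g j)| ≤ 1 := (abs_neg _).trans_le (hcg j)
      simpa [sub_eq_add_neg] using (hs j).add_smul_mem_of_abs_le_one (hw_add j) (hw_sub j) hneg)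
    (by simp only [map_smul, mul_smul, ← smul_sum, hg, smul_zero])
  have hwi : w i ≠ 0 := (mem_filter.1 hi).2
  simpa [hc.ne', hwi] using congrFun hu i

theorem ncard_notMem_extremePoints_le_finrank [FiniteDimensional ℝ V] (hs : ∀ i, Convex ℝ (s i))
    (hz : z ∈ {x : ∀ i, E i | (∀ i, x i ∈ s i) ∧ ∑ i, L i (x i) ∈ C}.extremePoints ℝ) :
    {i | z i ∉ (s i).extremePoints ℝ}.ncard ≤ finrank ℝ V := by
  classical
  have hdir : ∀ i, ∃ w,
      (z i ∉ (s i).extremePoints ℝ → w ≠ 0) ∧ z i + w ∈ s i ∧ z i - w ∈ s i := by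
    intro i
    by_cases hi : z i ∈ (s i).extremePoints ℝ
    · exact ⟨0, fun h ↦ (h hi).elim, by simpa using hz.1.1 i, by simpa using hz.1.1 i⟩
    · obtain ⟨w, hw, hadd, hsub⟩ := (hs i).exists_ne_zero_add_mem_sub_mem (hz.1.1 i) hi
      exact ⟨w, fun _ ↦ hw, hadd, hsub⟩
  choose w hw0 hw_add hw_sub using hdir
  calc {i | z i ∉ (s i).extremePoints ℝ}.ncard
      ≤ ({i | w i ≠ 0} : Finset ι).card := by
        rw [← Set.ncard_coe_finset]
        exact Set.ncard_le_ncard (fun i hi ↦ by simpa using hw0 i hi)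
    _ ≤ finrank ℝ V := by
        simpa using
          (linearIndepOn_of_mem_extremePoints hs hz hw_add hw_sub).fintype_card_le_finrank

end Blocks

theorem extremePoint_relaxed_integer_blocks_general (n m : ℕ) (d : Fin n → ℕ)
    (Ω : ∀ i : Fin n, Set (Fin (d i) → ℝ))
    (A : ∀ i : Fin n, (Fin (d i) → ℝ) →ₗ[ℝ] (Fin m → ℝ))
    (ζ : Fin m → ℝ)
    (z : ∀ i : Fin n, Fin (d i) → ℝ)
    (hz : z ∈ Set.extremePoints ℝ
      { x : ∀ i : Fin n, Fin (d i) → ℝ |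
        (∀ i, x i ∈ convexHull ℝ (Ω i)) ∧ (∑ i, A i (x i)) ≤ ζ }) :
    n - m ≤ Set.ncard { i : Fin n | z i ∈ Ω i } := by
  have hfrac : {i | z i ∉ Ω i}.ncard ≤ m := by
    calc {i | z i ∉ Ω i}.ncard
        ≤ {i | z i ∉ (convexHull ℝ (Ω i)).extremePoints ℝ}.ncard :=
          Set.ncard_le_ncard fun i hi h ↦ hi (extremePoints_convexHull_subset h)
      _ ≤ finrank ℝ (Fin m → ℝ) :=
          ncard_notMem_extremePoints_le_finrank (C := Set.Iic ζ)
            (fun i ↦ convex_convexHull ℝ (Ω i)) hz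
      _ = m := finrank_fin_fun ℝ
  have hsplit := Set.ncard_add_ncard_compl {i | z i ∈ Ω i}
  simp only [Nat.card_eq_fintype_card, Fintype.card_fin, Set.compl_ofPred] at hsplit
  omega

/-- Any extreme point `z` of the feasible set of the relaxed problem
`F = { x : ∀ i, x i ∈ convexHull ℝ (Ω i), ∑ i, A i (x i) ≤ ζ }`
has at most `m` blocks `z i` that fail to belong to the original
mixed-integer sets `Ω i`; i.e. `{ i : z i ∈ Ω i }` has cardinality at least `n - m`. -/
theorem extremePoint_relaxed_integer_blocks (n m : ℕ) (d : Fin n → ℕ)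
    (Ω : ∀ i : Fin n, Set (Fin (d i) → ℝ))
    (hΩne : ∀ i, (Ω i).Nonempty) (hΩcpt : ∀ i, IsCompact (Ω i))
    (A : ∀ i : Fin n, (Fin (d i) → ℝ) →ₗ[ℝ] (Fin m → ℝ))
    (ζ : Fin m → ℝ)
    (z : ∀ i : Fin n, Fin (d i) → ℝ)
    (hz : z ∈ Set.extremePoints ℝ
      { x : ∀ i : Fin n, Fin (d i) → ℝ |
        (∀ i, x i ∈ convexHull ℝ (Ω i)) ∧ (∑ i, A i (x i)) ≤ ζ }) :
    n - m ≤ Set.ncard { i : Fin n | z i ∈ Ω i } :=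
  extremePoint_relaxed_integer_blocks_general n m d Ω A ζ z hz
end

section
/- Suppose x^1,…,x^K are points of { x ∈ X : Cx ≤ d } such that convexHull{ x ∈ X : Cx ≤ d } = convexHull{ x^1,…,x^K }. Then for every λ ∈ ℝ^k, v(λ) = inf{ fᵀx + λᵀ(Ax − b) : Cx ≤ d, x ∈ X } = min_{k'=1,…,K} ( fᵀx^{k'} + λᵀ(A x^{k'} − b) ); in particular the infimum is attained and v(λ) is the pointwise minimum of finitely many affine functions of λ. -/
open Matrix

/-- If `x^1, …, x^K` are points of `{ x ∈ X : Cx ≤ d }` whose convex hull equals the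
convex hull of `{ x ∈ X : Cx ≤ d }`, then for every `λ` the Lagrangian-relaxation value
`v(λ) = inf { fᵀx + λᵀ(Ax − b) : Cx ≤ d, x ∈ X }` equals the minimum over
`k' = 1, …, K` of the affine values `fᵀx^{k'} + λᵀ(Ax^{k'} − b)`; in particular the
infimum is attained at one of the points `x^{k'}`. -/
theorem lagrangian_value_eq_min_over_extreme_points (n k m K : ℕ) (hK : 0 < K)
    (X : Set (Fin n → ℝ)) (hX : X.Nonempty)
    (f : Fin n → ℝ)
    (A : Matrix (Fin k) (Fin n) ℝ) (b : Fin k → ℝ)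
    (C : Matrix (Fin m) (Fin n) ℝ) (d : Fin m → ℝ)
    (xs : Fin K → (Fin n → ℝ))
    (hxs : ∀ k', xs k' ∈ X ∧ C.mulVec (xs k') ≤ d)
    (hhull : convexHull ℝ { x | x ∈ X ∧ C.mulVec x ≤ d }
      = convexHull ℝ (Set.range xs)) :
    ∀ lam : Fin k → ℝ,
      (sInf { w : EReal | ∃ x ∈ X, C.mulVec x ≤ d ∧
          w = ((f ⬝ᵥ x + lam ⬝ᵥ (A.mulVec x - b) : ℝ) : EReal) }
        = ((⨅ k' : Fin K, (f ⬝ᵥ xs k' + lam ⬝ᵥ (A.mulVec (xs k') - b)) : ℝ) : EReal))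
      ∧
      (∃ k' : Fin K, (f ⬝ᵥ xs k' + lam ⬝ᵥ (A.mulVec (xs k') - b))
        = ⨅ k'' : Fin K, (f ⬝ᵥ xs k'' + lam ⬝ᵥ (A.mulVec (xs k'') - b))) := by
  intro lam
  haveI : Nonempty (Fin K) := Fin.pos_iff_nonempty.mp hK
  set g : (Fin n → ℝ) → ℝ := fun x => f ⬝ᵥ x + lam ⬝ᵥ (A.mulVec x - b) with hg
  set L : (Fin n → ℝ) → ℝ := fun x => f ⬝ᵥ x + lam ⬝ᵥ A.mulVec x with hL
  have hLlin : IsLinearMap ℝ L := by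
    constructor
    · intro x y
      simp [hL, mulVec_add, dotProduct_add]
      ring
    · intro c x
      simp [hL, mulVec_smul, dotProduct_smul, smul_eq_mul]
      ring
  have hgL : ∀ x, g x = L x - lam ⬝ᵥ b := by
    intro x
    simp [hg, hL, dotProduct_sub]
    ring
  -- the min is attained
  obtain ⟨k₀, hk₀⟩ := Finite.exists_min (fun k' : Fin K => g (xs k'))
  have hMle : ∀ k', (⨅ k'' : Fin K, g (xs k'')) ≤ g (xs k') := fun k' =>
    ciInf_le (Finite.bddBelow_range _) k'
  have hM : g (xs k₀) = ⨅ k'' : Fin K, g (xs k'') :=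
    le_antisymm (le_ciInf hk₀) (hMle k₀)
  refine ⟨?_, ⟨k₀, hM⟩⟩
  set M : ℝ := ⨅ k'' : Fin K, g (xs k'')
  -- key: g x ≥ M for all feasible x
  have hlb : ∀ x ∈ { x | x ∈ X ∧ C.mulVec x ≤ d }, M ≤ g x := by
    intro x hx
    have hconv : Convex ℝ { y | M + lam ⬝ᵥ b ≤ L y } :=
      convex_halfSpace_ge hLlin _
    have hsub : convexHull ℝ (Set.range xs) ⊆ { y | M + lam ⬝ᵥ b ≤ L y } := by
      apply convexHull_min _ hconv
      rintro y ⟨k', rfl⟩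
      have := hMle k'
      rw [hgL] at this
      simp only [Set.mem_setOf_eq]
      linarith
    have hx' : x ∈ convexHull ℝ (Set.range xs) := by
      rw [← hhull]; exact subset_convexHull ℝ _ hx
    have := hsub hx'
    rw [hgL]
    simp only [Set.mem_setOf_eq] at this
    linarith
  apply le_antisymm
  · exact sInf_le ⟨xs k₀, (hxs k₀).1, (hxs k₀).2, by rw [show f ⬝ᵥ xs k₀ + lam ⬝ᵥ (A.mulVec (xs k₀) - b) = g (xs k₀) from rfl, hM]⟩
  · apply le_sInf
    rintro w ⟨x, hx1, hx2, rfl⟩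
    exact_mod_cast hlb x ⟨hx1, hx2⟩
end
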